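/- The integral from 0 to 1 of B_1(z)³·B_5(z) dz equals (1/2)·B_1²·B_6 + (1/56)·B_8 − (1/12)·B_6. -/

import Mathlib

/-!
Integrate by parts three times, each time differentiating a power of `B₁` (whose derivative
is `1`) and integrating the other factor via `B_{n+1}' = (n + 1) B_n`. The boundary terms only
involve `B₁(1) = -B₁(0) = 1/2` and `B_k(1) = B_k(0)` for `k ≠ 1`; the `B₇` term vanishes since
`B₇ = 0`, and the last remaining integral is `∫₀¹ B₈ = 0`.
-/

noncomputable def B (k : ℕ) (x : ℝ) : ℝ :=
  Polynomial.aeval x (Polynomial.bernoulli k)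

open intervalIntegral

theorem B_eq_bernoulliFun : B = bernoulliFun := by
  ext k x
  rw [B, bernoulliFun, Polynomial.eval_map_algebraMap]

theorem hasDerivAt_bernoulliFun_one_pow (m : ℕ) (x : ℝ) :
    HasDerivAt (fun x ↦ bernoulliFun 1 x ^ (m + 1)) ((m + 1) * bernoulliFun 1 x ^ m) x :=
  ((hasDerivAt_bernoulliFun 1 x).fun_pow (m + 1)).congr_deriv (by simp)

theorem integral_bernoulliFun_one_pow_succ_mul (m n : ℕ) (a b : ℝ) :
    ∫ x in a..b, bernoulliFun 1 x ^ (m + 1) * bernoulliFun n x =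
      (bernoulliFun 1 b ^ (m + 1) * bernoulliFun (n + 1) b
          - bernoulliFun 1 a ^ (m + 1) * bernoulliFun (n + 1) a) / (n + 1)
        - (m + 1) / (n + 1) * ∫ x in a..b, bernoulliFun 1 x ^ m * bernoulliFun (n + 1) x := by
  rw [integral_mul_deriv_eq_deriv_mul (fun x _ ↦ hasDerivAt_bernoulliFun_one_pow m x)
    (fun x _ ↦ antideriv_bernoulliFun n x) (Continuous.intervalIntegrable (by fun_prop) a b)
    (intervalIntegrable_bernoulliFun n a b), ← integral_const_mul]
  congr 1
  · ring
  · congr 1 with x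
    ring

theorem integral_B1_cubed_B5 :
    ∫ z in (0:ℝ)..1, (B 1 z) ^ 3 * B 5 z =
      (1 / 2) * (B 1 0) ^ 2 * B 6 0 + (1 / 56) * B 8 0 - (1 / 12) * B 6 0 := by
  have hB7 : bernoulliFun 7 0 = 0 := by
    rw [bernoulliFun_eval_zero, bernoulli_eq_zero_of_odd (by decide) (by norm_num), Rat.cast_zero]
  rw [B_eq_bernoulliFun, integral_bernoulliFun_one_pow_succ_mul 2 5,
    integral_bernoulliFun_one_pow_succ_mul 1 6, integral_bernoulliFun_one_pow_succ_mul 0 7]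
  simp only [Nat.reduceAdd, pow_zero, one_mul]
  rw [integral_bernoulliFun_eq_zero (by norm_num),
    bernoulliFun_endpoints_eq_of_ne_one (k := 6) (by norm_num),
    bernoulliFun_endpoints_eq_of_ne_one (k := 7) (by norm_num),
    bernoulliFun_endpoints_eq_of_ne_one (k := 8) (by norm_num), hB7, bernoulliFun_one,
    bernoulliFun_one]
  ring
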